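/- Let G be a group and consider tuples (A', B', A, B, x₁, …, x_k) ∈ G^(4+k). Set w = A⁻¹ B⁻¹ A B'. For g ∈ G define ρ(g) : A' ↦ g A', B' ↦ g B' g⁻¹, A ↦ [g,w] A g⁻¹, B ↦ [g,w] B [g,w]⁻¹, x_j ↦ [g,w] x_j [g,w]⁻¹ (j = 1,…,k), where w is computed from the argument tuple and [g,w] = g w g⁻¹ w⁻¹. Then ρ is a left action of G on G^(4+k), and the word w is equivariant under conjugation: w evaluated on ρ(g)(A',B',A,B,x) equals g · w(A',B',A,B,x) · g⁻¹. -/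

import Mathlib

/-- The group commutator `[x,y] = x y x⁻¹ y⁻¹`. -/
def gcomm {G : Type*} [Group G] (x y : G) : G := x * y * x⁻¹ * y⁻¹

/-!
Let `alphaMap g c` be the map `(A', B', A, B, x) ↦ (g A', g B' g⁻¹, c A g⁻¹, c B c⁻¹, c xⱼ c⁻¹)`,
so that `ρ(g) = alphaMap g [g, w]`. These maps form an action of `G × G`, and `w` transforms under
`alphaMap g c` by conjugation with `g` whatever `c` is, because `c` cancels in `A⁻¹ B⁻¹ A`.
Hence `ρ` is an action as soon as `g ↦ [g, w]` is a cocycle,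
`[g₁ g₂, w] = [g₁, g₂ w g₂⁻¹] [g₂, w]`, which is a direct computation.
-/

section

variable {G : Type*} [Group G] {k : ℕ}

theorem gcomm_one_left (y : G) : gcomm 1 y = 1 := by
  simp [gcomm]

theorem gcomm_mul_left (g₁ g₂ y : G) :
    gcomm (g₁ * g₂) y = gcomm g₁ (g₂ * y * g₂⁻¹) * gcomm g₂ y := by
  simp only [gcomm]
  group

def alphaWord (p : G × G × G × G × (Fin k → G)) : G :=
  p.2.2.1⁻¹ * p.2.2.2.1⁻¹ * p.2.2.1 * p.2.1

def alphaMap (g c : G) (p : G × G × G × G × (Fin k → G)) : G × G × G × G × (Fin k → G) :=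
  (g * p.1, g * p.2.1 * g⁻¹, c * p.2.2.1 * g⁻¹, c * p.2.2.2.1 * c⁻¹,
    fun l => c * p.2.2.2.2 l * c⁻¹)

theorem alphaMap_one_one (p : G × G × G × G × (Fin k → G)) : alphaMap 1 1 p = p := by
  simp [alphaMap]

theorem alphaMap_mul (g₁ g₂ c₁ c₂ : G) (p : G × G × G × G × (Fin k → G)) :
    alphaMap (g₁ * g₂) (c₁ * c₂) p = alphaMap g₁ c₁ (alphaMap g₂ c₂ p) := by
  simp only [alphaMap, mul_inv_rev, mul_assoc]

theorem alphaWord_alphaMap (g c : G) (p : G × G × G × G × (Fin k → G)) :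
    alphaWord (alphaMap g c p) = g * alphaWord p * g⁻¹ := by
  simp only [alphaWord, alphaMap]
  group

end

/-- With `w = A⁻¹ B⁻¹ A B'`, the map
`ρ(g) : (A', B', A, B, x) ↦ (g A', g B' g⁻¹, [g,w] A g⁻¹, [g,w] B [g,w]⁻¹, [g,w] xⱼ [g,w]⁻¹)`
is a left action of `G` on `G^(4+k)`, and the word `w` is equivariant under
conjugation. -/
theorem action_for_curve_alpha {G : Type*} [Group G] {k : ℕ}
    (w : G → G → G → G) (hw : ∀ B' A B, w B' A B = A⁻¹ * B⁻¹ * A * B')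
    (ρ : G → (G × G × G × G × (Fin k → G)) → (G × G × G × G × (Fin k → G)))
    (hρ : ∀ (g A' B' A B : G) (x : Fin k → G),
      ρ g (A', B', A, B, x) =
        (g * A',
         g * B' * g⁻¹,
         gcomm g (w B' A B) * A * g⁻¹,
         gcomm g (w B' A B) * B * (gcomm g (w B' A B))⁻¹,
         fun l => gcomm g (w B' A B) * x l * (gcomm g (w B' A B))⁻¹)) :
    (∀ p, ρ 1 p = p) ∧ (∀ g₁ g₂ p, ρ (g₁ * g₂) p = ρ g₁ (ρ g₂ p)) ∧
    (∀ (g A' B' A B : G) (x : Fin k → G),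
      w (ρ g (A', B', A, B, x)).2.1 (ρ g (A', B', A, B, x)).2.2.1
          (ρ g (A', B', A, B, x)).2.2.2.1
        = g * w B' A B * g⁻¹) := by
  have hw' : ∀ p : G × G × G × G × (Fin k → G), w p.2.1 p.2.2.1 p.2.2.2.1 = alphaWord p :=
    fun p => hw _ _ _
  have hρ' : ∀ g p, ρ g p = alphaMap g (gcomm g (alphaWord p)) p := by
    rintro g ⟨A', B', A, B, x⟩
    rw [hρ, ← hw']
    rfl
  refine ⟨fun p => ?_, fun g₁ g₂ p => ?_, fun g A' B' A B x => ?_⟩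
  · rw [hρ', gcomm_one_left, alphaMap_one_one]
  · rw [hρ', hρ' g₂, hρ' g₁, alphaWord_alphaMap, ← alphaMap_mul, gcomm_mul_left]
  · rw [hw', hw' (A', B', A, B, x), hρ', alphaWord_alphaMap]
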